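/- arXiv:2203.06940 — 2 statements merged into one kernel-verified Lean document; each statement's English description precedes it below -/
import Mathlib

section
/- Let N ≥ 1 be an integer, 1 < p < q, and let v be a radial Neumann solution with exponent q. Then for every r ∈ [0,1] one has v(r) ≤ (q/p)^{1/(q−p)} and v'(r) ≤ ((q−p)/(q(p−1)))^{1/p}. -/
open Real Set Filter intervalIntegral

/-- `v : [0,1] → ℝ` is a radial Neumann solution with exponent `q` of
`-Δ_p v + v^{p-1} = v^{q-1}` in the unit ball of `ℝ^N`, in the cone of positive,
radially nondecreasing functions; `v'` is its derivative on `[0,1]`. -/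
def IsRadialNeumannSol (N : ℕ) (p q : ℝ) (v v' : ℝ → ℝ) : Prop :=
  (∀ r ∈ Set.Icc (0:ℝ) 1, HasDerivWithinAt v (v' r) (Set.Icc (0:ℝ) 1) r) ∧
  ContinuousOn v' (Set.Icc (0:ℝ) 1) ∧
  (∀ r ∈ Set.Icc (0:ℝ) 1, 0 < v r) ∧
  MonotoneOn v (Set.Icc (0:ℝ) 1) ∧
  (∀ r ∈ Set.Icc (0:ℝ) 1, 0 ≤ v' r) ∧
  v' 0 = 0 ∧ v' 1 = 0 ∧
  (∀ r ∈ Set.Ioo (0:ℝ) 1,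
    HasDerivAt (fun s => s ^ (N - 1) * v' s ^ (p - 1))
      (r ^ (N - 1) * (v r ^ (p - 1) - v r ^ (q - 1))) r)

/-! The proof is an energy argument. Along a solution the energy
`E = (p-1)/p · v'^p - F(v)`, with `F(t) = t^p/p - t^q/q`, satisfies `E' = -(N-1)/r · v'^p ≤ 0`.
The equation forces `v(0) ≤ 1`: otherwise `r^{N-1} v'^{p-1}` would be strictly
decreasing while vanishing at both ends. Hence `E(0) = -F(v(0)) ≤ 0`, so `E ≤ 0` on `[0,1]`.
At `r = 1` this gives `F(v(1)) ≥ 0`, i.e. `v ≤ v(1) ≤ (q/p)^{1/(q-p)}`; elsewhere it gives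
`(p-1)/p · v'^p ≤ F(v) ≤ max F = F(1) = 1/p - 1/q`. -/

open Topology

/-- The potential `F` of the nonlinearity `t^{p-1} - t^{q-1}`. -/
noncomputable def potential (p q t : ℝ) : ℝ := t ^ p / p - t ^ q / q

noncomputable def radialEnergy (p q : ℝ) (v v' : ℝ → ℝ) (r : ℝ) : ℝ :=
  (p - 1) / p * v' r ^ p - potential p q (v r)

section Potential

variable {p q t : ℝ}

theorem potential_le (hp : 0 < p) (hpq : p < q) (ht : 0 ≤ t) :
    potential p q t ≤ 1 / p - 1 / q := by
  have hq : 0 < q := hp.trans hpq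
  -- weighted AM-GM: `t^p = (t^q)^{p/q} · 1^{(q-p)/q} ≤ p/q · t^q + (q-p)/q`
  have amgm := geom_mean_le_arith_mean2_weighted (div_nonneg hp.le hq.le)
    (div_nonneg (sub_nonneg.2 hpq.le) hq.le) (rpow_nonneg ht q) zero_le_one
    (by field_simp; ring)
  rw [one_rpow, mul_one, mul_one, ← rpow_mul ht, mul_div_cancel₀ _ hq.ne'] at amgm
  unfold potential
  rw [div_sub_div _ _ hp.ne' hq.ne', div_sub_div _ _ hp.ne' hq.ne',
    div_le_div_iff_of_pos_right (mul_pos hp hq)]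
  have := mul_le_mul_of_nonneg_right amgm hq.le
  field_simp at this
  linarith

theorem potential_nonneg (hp : 0 < p) (hpq : p ≤ q) (ht₀ : 0 < t) (ht₁ : t ≤ 1) :
    0 ≤ potential p q t := by
  have hq : 0 < q := hp.trans_le hpq
  have hpow : t ^ q ≤ t ^ p := rpow_le_rpow_of_exponent_ge ht₀ ht₁ hpq
  unfold potential
  rw [sub_nonneg]
  calc t ^ q / q ≤ t ^ p / q := by gcongr
    _ ≤ t ^ p / p := div_le_div_of_nonneg_left (rpow_nonneg ht₀.le p) hp hpq

theorem le_of_potential_nonneg (hp : 0 < p) (hpq : p < q) (ht : 0 < t)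
    (hF : 0 ≤ potential p q t) : t ≤ (q / p) ^ (1 / (q - p)) := by
  have hq : 0 < q := hp.trans hpq
  rw [one_div, le_rpow_inv_iff_of_pos ht.le (div_pos hq hp).le (sub_pos.2 hpq),
    rpow_sub ht, div_le_div_iff₀ (rpow_pos_of_pos ht p) hp]
  unfold potential at hF
  rw [sub_nonneg, div_le_div_iff₀ hq hp] at hF
  linarith

theorem le_of_kinetic_le_potential (hp : 1 < p) (hpq : p < q) (ht : 0 ≤ t) {x : ℝ}
    (hx : 0 ≤ x) (hE : (p - 1) / p * x ^ p ≤ potential p q t) :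
    x ≤ ((q - p) / (q * (p - 1))) ^ (1 / p) := by
  have hp₀ : 0 < p := one_pos.trans hp
  have hq : 0 < q := hp₀.trans hpq
  have hp₁ : 0 < p - 1 := sub_pos.2 hp
  have hE' := hE.trans (potential_le hp₀ hpq ht)
  rw [one_div, le_rpow_inv_iff_of_pos hx (by positivity) hp₀, le_div_iff₀ (by positivity)]
  rw [div_sub_div _ _ hp₀.ne' hq.ne', div_mul_eq_mul_div,
    div_le_div_iff₀ hp₀ (by positivity)] at hE'
  nlinarith

end Potential

theorem HasDerivAt.of_pow_mul {g : ℝ → ℝ} {n : ℕ} {r c : ℝ} (hr : r ≠ 0)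
    (h : HasDerivAt (fun s => s ^ n * g s) (r ^ n * c) r) :
    HasDerivAt g (c - n / r * g r) r := by
  have hinv := (hasDerivAt_pow n r).inv (pow_ne_zero n hr)
  have hg : (fun s => s ^ n * g s * (s ^ n)⁻¹) =ᶠ[𝓝 r] g := by
    filter_upwards [eventually_ne_nhds hr] with s hs
    field_simp
  refine ((h.mul hinv).congr_of_eventuallyEq hg.symm).congr_deriv ?_
  rcases n with _ | m
  · simp
  · simp only [Nat.add_sub_cancel, Pi.inv_apply]
    field_simp
    ring

theorem HasDerivAt.rpow_of_rpow_sub_one {f : ℝ → ℝ} {p r d : ℝ} (hp : 1 < p)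
    (hf : ∀ᶠ s in 𝓝 r, 0 ≤ f s) (h : HasDerivAt (fun s => f s ^ (p - 1)) d r) :
    HasDerivAt (fun s => f s ^ p) (p / (p - 1) * f r * d) r := by
  have hp₁ : 0 < p - 1 := sub_pos.2 hp
  have hexp : 1 ≤ p / (p - 1) := by rw [le_div_iff₀ hp₁]; linarith
  have hpow : (fun s => (f s ^ (p - 1)) ^ (p / (p - 1))) =ᶠ[𝓝 r] fun s => f s ^ p := by
    filter_upwards [hf] with s hs
    rw [← rpow_mul hs, mul_div_cancel₀ _ hp₁.ne']
  refine ((h.rpow_const (Or.inr hexp)).congr_of_eventuallyEq hpow.symm).congr_deriv ?_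
  rw [← rpow_mul hf.self_of_nhds, show (p - 1) * (p / (p - 1) - 1) = 1 by field_simp; ring,
    rpow_one]
  ring

namespace IsRadialNeumannSol

variable {N : ℕ} {p q : ℝ} {v v' : ℝ → ℝ}

theorem hasDerivAt_rpow_deriv (hsol : IsRadialNeumannSol N p q v v') {r : ℝ}
    (hr : r ∈ Ioo (0 : ℝ) 1) :
    HasDerivAt (fun s => v' s ^ (p - 1))
      (v r ^ (p - 1) - v r ^ (q - 1) - ((N - 1 : ℕ) : ℝ) / r * v' r ^ (p - 1)) r :=
  (hsol.2.2.2.2.2.2.2 r hr).of_pow_mul hr.1.ne'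

theorem hasDerivAt_radialEnergy (hsol : IsRadialNeumannSol N p q v v') (hp : 1 < p) (hq : q ≠ 0)
    {r : ℝ} (hr : r ∈ Ioo (0 : ℝ) 1) :
    HasDerivAt (radialEnergy p q v v') (-(((N - 1 : ℕ) : ℝ) / r * v' r ^ p)) r := by
  have ⟨hv, _, hvpos, _, hv'nn, _⟩ := hsol
  have hp₀ : 0 < p := one_pos.trans hp
  have hrI : r ∈ Icc (0 : ℝ) 1 := Ioo_subset_Icc_self hr
  have hI : Icc (0 : ℝ) 1 ∈ 𝓝 r := Icc_mem_nhds hr.1 hr.2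
  have hvr : HasDerivAt v (v' r) r := (hv r hrI).hasDerivAt hI
  have hkin := (hsol.hasDerivAt_rpow_deriv hr).rpow_of_rpow_sub_one hp
    (mem_of_superset hI hv'nn)
  have hvp := hvr.rpow_const (p := p) (Or.inl (hvpos r hrI).ne')
  have hvq := hvr.rpow_const (p := q) (Or.inl (hvpos r hrI).ne')
  refine ((hkin.const_mul ((p - 1) / p)).sub
    ((hvp.div_const p).sub (hvq.div_const q))).congr_deriv ?_
  have hsplit : v' r ^ p = v' r * v' r ^ (p - 1) := by
    rw [← rpow_one_add' (hv'nn r hrI) (by linarith), add_sub_cancel]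
  have hp₁ : p - 1 ≠ 0 := (sub_pos.2 hp).ne'
  rw [hsplit]
  field_simp
  ring

theorem antitoneOn_radialEnergy (hsol : IsRadialNeumannSol N p q v v') (hp : 1 < p)
    (hq : q ≠ 0) :
    AntitoneOn (radialEnergy p q v v') (Icc 0 1) := by
  have ⟨hv, hv'c, hvpos, _, hv'nn, _⟩ := hsol
  have hp₀ : 0 < p := one_pos.trans hp
  have hvc : ContinuousOn v (Icc 0 1) := fun r hr => (hv r hr).continuousWithinAt
  have hcont : ContinuousOn (radialEnergy p q v v') (Icc 0 1) :=
    ((hv'c.rpow_const fun _ _ => Or.inr hp₀.le).const_smul ((p - 1) / p)).sub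
      (((hvc.rpow_const fun r hr => Or.inl (hvpos r hr).ne').div_const p).sub
        ((hvc.rpow_const fun r hr => Or.inl (hvpos r hr).ne').div_const q))
  refine antitoneOn_of_deriv_nonpos (convex_Icc 0 1) hcont (fun r hr => ?_) fun r hr => ?_
  all_goals rw [interior_Icc] at hr
  · exact (hsol.hasDerivAt_radialEnergy hp hq hr).differentiableAt.differentiableWithinAt
  rw [(hsol.hasDerivAt_radialEnergy hp hq hr).deriv, neg_nonpos]
  exact mul_nonneg (div_nonneg (Nat.cast_nonneg _) hr.1.le)
    (rpow_nonneg (hv'nn r (Ioo_subset_Icc_self hr)) p)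

theorem apply_zero_le_one (hsol : IsRadialNeumannSol N p q v v') (hp : 1 < p) (hpq : p < q) :
    v 0 ≤ 1 := by
  have ⟨_, hv'c, _, hvmono, _, hv'0, hv'1, hW⟩ := hsol
  by_contra! hv0
  have hv : ∀ r ∈ Icc (0 : ℝ) 1, 1 < v r := fun r hr =>
    hv0.trans_le (hvmono (left_mem_Icc.2 zero_le_one) hr hr.1)
  have hcont : ContinuousOn (fun s : ℝ => s ^ (N - 1) * v' s ^ (p - 1)) (Icc 0 1) :=
    (continuous_pow _).continuousOn.mul (hv'c.rpow_const fun _ _ => Or.inr (sub_pos.2 hp).le)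
  have hanti := strictAntiOn_of_deriv_neg (convex_Icc 0 1) hcont fun r hr => by
    rw [interior_Icc] at hr
    rw [(hW r hr).deriv]
    exact mul_neg_of_pos_of_neg (pow_pos hr.1 _) (sub_neg.2
      (rpow_lt_rpow_of_exponent_lt (hv r (Ioo_subset_Icc_self hr)) (by linarith)))
  have := hanti (left_mem_Icc.2 zero_le_one) (right_mem_Icc.2 zero_le_one) zero_lt_one
  simp only [hv'0, hv'1, zero_rpow (sub_pos.2 hp).ne', mul_zero, lt_irrefl] at this

theorem radialEnergy_nonpos (hsol : IsRadialNeumannSol N p q v v') (hp : 1 < p) (hpq : p < q)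
    {r : ℝ} (hr : r ∈ Icc (0 : ℝ) 1) : radialEnergy p q v v' r ≤ 0 := by
  have ⟨_, _, hvpos, _, _, hv'0, _⟩ := hsol
  have hp₀ : 0 < p := one_pos.trans hp
  have h0 : (0 : ℝ) ∈ Icc (0 : ℝ) 1 := left_mem_Icc.2 zero_le_one
  have hE0 : radialEnergy p q v v' 0 = -potential p q (v 0) := by
    simp [radialEnergy, hv'0, zero_rpow hp₀.ne']
  calc radialEnergy p q v v' r ≤ radialEnergy p q v v' 0 :=
        hsol.antitoneOn_radialEnergy hp (hp₀.trans hpq).ne' h0 hr hr.1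
    _ ≤ 0 := by
        rw [hE0, neg_nonpos]
        exact potential_nonneg hp₀ hpq.le (hvpos 0 h0) (hsol.apply_zero_le_one hp hpq)

end IsRadialNeumannSol

theorem apriori_C1_bounds_general
    (N : ℕ) (p q : ℝ) (hp : 1 < p) (hpq : p < q)
    (v v' : ℝ → ℝ) (hsol : IsRadialNeumannSol N p q v v') :
    ∀ r ∈ Set.Icc (0:ℝ) 1,
      v r ≤ (q / p) ^ (1 / (q - p)) ∧
      v' r ≤ ((q - p) / (q * (p - 1))) ^ (1 / p) := by
  have ⟨_, _, hvpos, hvmono, hv'nn, _, hv'1, _⟩ := hsol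
  have hp₀ : 0 < p := one_pos.trans hp
  have h1 : (1 : ℝ) ∈ Icc (0 : ℝ) 1 := right_mem_Icc.2 zero_le_one
  intro r hr
  have hE := hsol.radialEnergy_nonpos hp hpq hr
  have hE1 := hsol.radialEnergy_nonpos hp hpq h1
  simp only [radialEnergy, hv'1, zero_rpow hp₀.ne', mul_zero, zero_sub, neg_nonpos] at hE1
  exact ⟨(hvmono hr h1 hr.2).trans (le_of_potential_nonneg hp₀ hpq (hvpos 1 h1) hE1),
    le_of_kinetic_le_potential hp hpq (hvpos r hr).le (hv'nn r hr) (by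
      simpa only [radialEnergy, sub_nonpos] using hE)⟩

/-- A priori `C^1` bounds for radial Neumann solutions in the cone:
`v(r) ≤ (q/p)^{1/(q-p)}` and `v'(r) ≤ ((q-p)/(q(p-1)))^{1/p}`. -/
theorem apriori_C1_bounds
    (N : ℕ) (hN : 1 ≤ N) (p q : ℝ) (hp : 1 < p) (hpq : p < q)
    (v v' : ℝ → ℝ) (hsol : IsRadialNeumannSol N p q v v') :
    ∀ r ∈ Set.Icc (0:ℝ) 1,
      v r ≤ (q / p) ^ (1 / (q - p)) ∧
      v' r ≤ ((q - p) / (q * (p - 1))) ^ (1 / p) :=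
  apriori_C1_bounds_general N p q hp hpq v v' hsol
end

section
/- Let N ≥ 1 be an integer and 1 < p < 2. Suppose (q_n) is a sequence of reals with q_n > p and q_n → ∞, and for each n let v_n be a radial Neumann solution with exponent q_n. Assume v_n → v uniformly on [0,1] for some continuous nondecreasing function v, and that there is R̄ ∈ (0,1] with v(r) < 1 for every r ∈ [0,R̄). Then v is differentiable on (0,R̄) and, for every continuously differentiable function φ : ℝ → ℝ whose support is a compact subset of the open interval (0,R̄), one has ∫_0^{R̄} r^{N−1}·( v'(r)^{p−1}·φ'(r) + v(r)^{p−1}·φ(r) ) dr = 0; that is, v weakly solves −(r^{N−1}(v')^{p−1})' + r^{N−1}v^{p−1} = 0 on (0,R̄), the radial form of the limit equation −Δ_p v + v^{p−1} = 0 in B_{R̄}. -/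
/-!
Write `W_n = r^(N-1) (v_n')^(p-1)` for the flux, so that
`W_n(r) = ∫₀ʳ t^(N-1) (v_n^(p-1) - v_n^(q_n-1))`. On `[0,r]` with `r < R̄` the limit `v` stays
below `1`, hence so do the `v_n` for large `n`; there `v_n^(q_n-1) → 0`, and dominated convergence
gives `W_n → F := ∫₀ʳ t^(N-1) v^(p-1)`. Inverting the flux, `v_n' → g := (F / r^(N-1))^(1/(p-1))`,
boundedly on `[δ,r]` since `W_n ≤ 1` there. Passing to the limit in `v_n(r) - v_n(δ) = ∫_δ^r v_n'`
makes `v` a primitive of the continuous function `g`, so `r^(N-1) (v')^(p-1) = F` on `(0,R̄)`, and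
the weak equation is integration by parts against `F`.
-/

open Real Set Filter intervalIntegral
open Topology

theorem TendstoUniformlyOn.eventually_lt_of_isCompact {ι α : Type*} [TopologicalSpace α]
    {l : Filter ι} {F : ι → α → ℝ} {f : α → ℝ} {K : Set α} {c : ℝ}
    (hF : TendstoUniformlyOn F f l K) (hK : IsCompact K) (hf : ContinuousOn f K)
    (hfc : ∀ x ∈ K, f x < c) : ∀ᶠ n in l, ∀ x ∈ K, F n x < c := by
  rcases K.eq_empty_or_nonempty with rfl | hne
  · simp
  obtain ⟨x₀, hx₀, hmax⟩ := hK.exists_isMaxOn hne hf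
  filter_upwards [Metric.tendstoUniformlyOn_iff.mp hF _ (sub_pos.2 (hfc x₀ hx₀))] with n hn x hx
  have hclose := abs_sub_lt_iff.1 (hn x hx)
  linarith [isMaxOn_iff.1 hmax x hx, hclose.2]

theorem tendsto_rpow_of_tendsto_lt_one {ι : Type*} {l : Filter ι} {x e : ι → ℝ} {a : ℝ}
    (hx0 : ∀ᶠ i in l, 0 ≤ x i) (hx : Tendsto x l (𝓝 a)) (ha : a < 1)
    (he : Tendsto e l atTop) : Tendsto (fun i => x i ^ e i) l (𝓝 0) := by
  obtain ⟨b, hab, hb1⟩ := exists_between (max_lt ha one_pos)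
  have hb0 : 0 < b := (le_max_right a 0).trans_lt hab
  refine squeeze_zero' (hx0.mono fun i hi => rpow_nonneg hi _) ?_
    ((tendsto_rpow_atTop_of_base_lt_one b (by linarith) hb1).comp he)
  filter_upwards [hx0, hx.eventually (gt_mem_nhds ((le_max_left a 0).trans_lt hab)),
    he.eventually_ge_atTop 0] with i hi0 hib hie
  exact rpow_le_rpow hi0 hib.le hie

theorem tendsto_intervalIntegral_of_eventually_abs_le {ι : Type*} {l : Filter ι}
    [l.IsCountablyGenerated] {f : ι → ℝ → ℝ} {g : ℝ → ℝ} {a b C : ℝ} (hab : a ≤ b)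
    (hf : ∀ᶠ n in l, ContinuousOn (f n) (Icc a b))
    (hC : ∀ᶠ n in l, ∀ x ∈ Icc a b, |f n x| ≤ C)
    (hlim : ∀ x ∈ Icc a b, Tendsto (fun n => f n x) l (𝓝 (g x))) :
    Tendsto (fun n => ∫ x in a..b, f n x) l (𝓝 (∫ x in a..b, g x)) := by
  have hsub : uIoc a b ⊆ Icc a b := by rw [uIoc_of_le hab]; exact Ioc_subset_Icc_self
  exact tendsto_integral_filter_of_dominated_convergence (fun _ => C)
    (hf.mono fun n hn => (hn.mono hsub).aestronglyMeasurable measurableSet_uIoc)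
    (hC.mono fun n hn => MeasureTheory.ae_of_all _ fun x hx => hn x (hsub hx))
    intervalIntegrable_const
    (MeasureTheory.ae_of_all _ fun x hx => hlim x (hsub hx))

theorem hasDerivAt_integral_of_continuousOn {f : ℝ → ℝ} {a b x : ℝ}
    (hf : ContinuousOn f (Icc a b)) (hx : x ∈ Ioo a b) :
    HasDerivAt (fun r => ∫ t in a..r, f t) (f x) x :=
  integral_hasDerivAt_right
    ((hf.mono (Icc_subset_Icc_right hx.2.le)).intervalIntegrable_of_Icc hx.1.le)
    ((hf.mono Ioo_subset_Icc_self).stronglyMeasurableAtFilter isOpen_Ioo x hx)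
    (hf.continuousAt (Icc_mem_nhds hx.1 hx.2))

theorem integral_mul_deriv_add_deriv_mul_eq_zero {U : Set ℝ} {F f φ φ' : ℝ → ℝ}
    (hU : IsOpen U) (hF : ∀ x ∈ U, HasDerivAt F (f x) x) (hf : ContinuousOn f U)
    (hφ : ∀ x, HasDerivAt φ (φ' x) x) (hφ' : Continuous φ') (hφU : tsupport φ ⊆ U)
    {a b : ℝ} (ha : a ∉ tsupport φ) (hb : b ∉ tsupport φ) :
    ∫ x in a..b, (F x * φ' x + f x * φ x) = 0 := by
  have hvanish : ∀ x ∉ tsupport φ, ∀ᶠ y in 𝓝 x, φ y = 0 ∧ φ' y = 0 := by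
    intro x hx
    filter_upwards [(isClosed_tsupport φ).isOpen_compl.mem_nhds hx] with y hy
    refine ⟨image_eq_zero_of_notMem_tsupport hy, ?_⟩
    rw [← (hφ y).deriv]
    exact Function.notMem_support.1 fun h => hy (support_deriv_subset h)
  have hderiv : ∀ x, HasDerivAt (fun y => F y * φ y) (F x * φ' x + f x * φ x) x := by
    intro x
    by_cases hx : x ∈ tsupport φ
    · exact ((hF x (hφU hx)).mul (hφ x)).congr_deriv (by ring)
    · obtain ⟨hφx, hφ'x⟩ := (hvanish x hx).self_of_nhds
      rw [hφx, hφ'x, mul_zero, mul_zero, add_zero]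
      refine (hasDerivAt_const x (0 : ℝ)).congr_of_eventuallyEq ?_
      filter_upwards [hvanish x hx] with y hy
      simp [hy.1]
  have hcont : Continuous fun x => F x * φ' x + f x * φ x := by
    refine continuous_iff_continuousAt.2 fun x => ?_
    by_cases hx : x ∈ tsupport φ
    · have hxU := hU.mem_nhds (hφU hx)
      exact ((hF x (hφU hx)).continuousAt.mul hφ'.continuousAt).add
        ((hf.continuousAt hxU).mul (hφ x).continuousAt)
    · refine continuousAt_const.congr (f := fun _ => (0 : ℝ)) ?_
      filter_upwards [hvanish x hx] with y hy
      simp [hy.1, hy.2]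
  rw [integral_eq_sub_of_hasDerivAt (fun x _ => hderiv x) (hcont.intervalIntegrable a b),
    image_eq_zero_of_notMem_tsupport ha, image_eq_zero_of_notMem_tsupport hb]
  ring

noncomputable def radialFlux (N : ℕ) (p : ℝ) (w : ℝ → ℝ) (r : ℝ) : ℝ :=
  r ^ (N - 1) * w r ^ (p - 1)

noncomputable def radialFluxInv (N : ℕ) (p : ℝ) (W : ℝ → ℝ) (r : ℝ) : ℝ :=
  (W r / r ^ (N - 1)) ^ (p - 1)⁻¹

section RadialFlux

variable {N : ℕ} {p r : ℝ}

theorem radialFlux_nonneg {w : ℝ → ℝ} (hr : 0 ≤ r) (hw : 0 ≤ w r) : 0 ≤ radialFlux N p w r :=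
  mul_nonneg (pow_nonneg hr _) (rpow_nonneg hw _)

theorem continuousOn_radialFlux {w : ℝ → ℝ} {s : Set ℝ} (hp : 1 ≤ p) (hw : ContinuousOn w s) :
    ContinuousOn (radialFlux N p w) s :=
  (continuousOn_id.pow _).mul (hw.rpow_const fun _ _ => Or.inr (sub_nonneg.2 hp))

theorem radialFluxInv_radialFlux {w : ℝ → ℝ} (hp : p ≠ 1) (hr : 0 < r) (hw : 0 ≤ w r) :
    radialFluxInv N p (radialFlux N p w) r = w r := by
  rw [radialFluxInv, radialFlux, mul_div_cancel_left₀ _ (pow_ne_zero _ hr.ne'),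
    rpow_rpow_inv hw (sub_ne_zero.2 hp)]

theorem radialFlux_radialFluxInv {W : ℝ → ℝ} (hp : p ≠ 1) (hr : 0 < r) (hW : 0 ≤ W r) :
    radialFlux N p (radialFluxInv N p W) r = W r := by
  rw [radialFlux, radialFluxInv, rpow_inv_rpow (div_nonneg hW (pow_nonneg hr.le _))
    (sub_ne_zero.2 hp), mul_div_cancel₀ _ (pow_ne_zero _ hr.ne')]

theorem continuousAt_radialFluxInv {W : ℝ → ℝ} (hp : 1 < p) (hr : r ≠ 0)
    (hW : ContinuousAt W r) : ContinuousAt (radialFluxInv N p W) r :=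
  (hW.div (continuousAt_id.pow _) (pow_ne_zero _ hr)).rpow_const
    (Or.inr (inv_nonneg.2 (sub_nonneg.2 hp.le)))

end RadialFlux

namespace IsRadialNeumannSol

variable {N : ℕ} {p : ℝ}

section SingleSolution

variable {q : ℝ} {v v' : ℝ → ℝ}

theorem pos (h : IsRadialNeumannSol N p q v v') : ∀ r ∈ Icc (0 : ℝ) 1, 0 < v r := h.2.2.1

theorem deriv_nonneg (h : IsRadialNeumannSol N p q v v') : ∀ r ∈ Icc (0 : ℝ) 1, 0 ≤ v' r :=
  h.2.2.2.2.1

theorem continuousOn_deriv (h : IsRadialNeumannSol N p q v v') : ContinuousOn v' (Icc 0 1) :=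
  h.2.1

theorem continuousOn (h : IsRadialNeumannSol N p q v v') : ContinuousOn v (Icc 0 1) :=
  fun r hr => (h.1 r hr).continuousWithinAt

theorem integral_deriv (h : IsRadialNeumannSol N p q v v') {a b : ℝ} (ha : 0 ≤ a) (hab : a ≤ b)
    (hb : b ≤ 1) : ∫ r in a..b, v' r = v b - v a :=
  integral_eq_sub_of_hasDerivAt_of_le hab (h.continuousOn.mono (Icc_subset_Icc ha hb))
    (fun x hx => (h.1 x ⟨ha.trans hx.1.le, hx.2.le.trans hb⟩).hasDerivAt
      (Icc_mem_nhds (ha.trans_lt hx.1) (hx.2.trans_le hb)))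
    ((h.continuousOn_deriv.mono (Icc_subset_Icc ha hb)).intervalIntegrable_of_Icc hab)

theorem continuousOn_source (h : IsRadialNeumannSol N p q v v') :
    ContinuousOn (fun t => t ^ (N - 1) * (v t ^ (p - 1) - v t ^ (q - 1))) (Icc 0 1) :=
  (continuousOn_id.pow _).mul
    ((h.continuousOn.rpow_const fun t ht => Or.inl (h.pos t ht).ne').sub
      (h.continuousOn.rpow_const fun t ht => Or.inl (h.pos t ht).ne'))

theorem radialFlux_eq_integral (h : IsRadialNeumannSol N p q v v') (hp : 1 < p) {r : ℝ}
    (hr : r ∈ Icc (0 : ℝ) 1) :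
    radialFlux N p v' r = ∫ t in (0 : ℝ)..r, t ^ (N - 1) * (v t ^ (p - 1) - v t ^ (q - 1)) := by
  have hsource := h.continuousOn_source
  obtain ⟨-, hv'c, -, -, -, hv'0, -, hflux⟩ := h
  have hflux0 : radialFlux N p v' 0 = 0 := by
    rw [radialFlux, hv'0, zero_rpow (sub_pos.2 hp).ne', mul_zero]
  rw [integral_eq_sub_of_hasDerivAt_of_le hr.1
    ((continuousOn_radialFlux hp.le hv'c).mono (Icc_subset_Icc_right hr.2))
    (fun x hx => hflux x ⟨hx.1, hx.2.trans_le hr.2⟩)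
    ((hsource.mono (Icc_subset_Icc_right hr.2)).intervalIntegrable_of_Icc hr.1),
    hflux0, sub_zero]

theorem radialFlux_le (h : IsRadialNeumannSol N p q v v') (hp : 1 < p) {r : ℝ}
    (hr : r ∈ Icc (0 : ℝ) 1) (hv : ∀ t ∈ Icc 0 r, v t ≤ 1) : radialFlux N p v' r ≤ r := by
  have hsub : Icc 0 r ⊆ Icc (0 : ℝ) 1 := Icc_subset_Icc_right hr.2
  rw [h.radialFlux_eq_integral hp hr]
  calc ∫ t in (0 : ℝ)..r, t ^ (N - 1) * (v t ^ (p - 1) - v t ^ (q - 1))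
      ≤ ∫ _ in (0 : ℝ)..r, (1 : ℝ) := by
        refine integral_mono_on hr.1
          ((h.continuousOn_source.mono hsub).intervalIntegrable_of_Icc hr.1)
          intervalIntegrable_const fun t ht => ?_
        have ht1 := hsub ht
        have hpow : t ^ (N - 1) ≤ 1 := pow_le_one₀ ht1.1 ht1.2
        refine (mul_le_of_le_one_right (pow_nonneg ht1.1 _) ?_).trans hpow
        have := rpow_le_one (h.pos t ht1).le (hv t ht) (sub_pos.2 hp).le
        linarith [rpow_nonneg (h.pos t ht1).le (q - 1)]
    _ = r := by simp

end SingleSolution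

section Sequence

variable {q : ℕ → ℝ} {v v' : ℕ → ℝ → ℝ} {u : ℝ → ℝ}

theorem continuousOn_limit
    (hsol : ∀ n, IsRadialNeumannSol N p (q n) (v n) (v' n))
    (hconv : TendstoUniformlyOn v u atTop (Icc 0 1)) : ContinuousOn u (Icc 0 1) :=
  hconv.continuousOn (Frequently.of_forall fun n => (hsol n).continuousOn)

theorem eventually_lt_one
    (hsol : ∀ n, IsRadialNeumannSol N p (q n) (v n) (v' n))
    (hconv : TendstoUniformlyOn v u atTop (Icc 0 1)) {r : ℝ} (hr : r ≤ 1)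
    (hu : ∀ t ∈ Icc 0 r, u t < 1) : ∀ᶠ n in atTop, ∀ t ∈ Icc 0 r, v n t < 1 :=
  (hconv.mono (Icc_subset_Icc_right hr)).eventually_lt_of_isCompact isCompact_Icc
    ((continuousOn_limit hsol hconv).mono (Icc_subset_Icc_right hr)) hu

theorem tendsto_radialFlux (hp : 1 < p) (hqtop : Tendsto q atTop atTop)
    (hsol : ∀ n, IsRadialNeumannSol N p (q n) (v n) (v' n))
    (hconv : TendstoUniformlyOn v u atTop (Icc 0 1)) {r : ℝ} (hr : r ∈ Icc (0 : ℝ) 1)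
    (hu : ∀ t ∈ Icc 0 r, u t < 1) :
    Tendsto (fun n => radialFlux N p (v' n) r) atTop
      (𝓝 (∫ t in (0 : ℝ)..r, radialFlux N p u t)) := by
  have hsub : Icc 0 r ⊆ Icc (0 : ℝ) 1 := Icc_subset_Icc_right hr.2
  have hq : Tendsto (fun n => q n - 1) atTop atTop := by
    simpa only [sub_eq_add_neg] using tendsto_atTop_add_const_right _ (-1) hqtop
  refine Tendsto.congr (fun n => ((hsol n).radialFlux_eq_integral hp hr).symm) ?_
  refine tendsto_intervalIntegral_of_eventually_abs_le (C := 1) hr.1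
    (Eventually.of_forall fun n => (hsol n).continuousOn_source.mono hsub) ?_ fun t ht => ?_
  · filter_upwards [eventually_lt_one hsol hconv hr.2 hu, hq.eventually_ge_atTop 0]
      with n hv hqn t ht
    have ht1 := hsub ht
    have hpos := (hsol n).pos t ht1
    have hvp_le := rpow_le_one hpos.le (hv t ht).le (sub_pos.2 hp).le
    have hvq_le := rpow_le_one hpos.le (hv t ht).le hqn
    have hvp_nonneg := rpow_nonneg hpos.le (p - 1)
    have hvq_nonneg := rpow_nonneg hpos.le (q n - 1)
    rw [abs_mul, abs_of_nonneg (pow_nonneg ht1.1 _)]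
    exact mul_le_one₀ (pow_le_one₀ ht1.1 ht1.2) (abs_nonneg _)
      (abs_sub_le_iff.2 ⟨by linarith, by linarith⟩)
  · have hvt := hconv.tendsto_at (hsub ht)
    have hlim := (hvt.rpow_const (Or.inr (sub_pos.2 hp).le)).sub
      (tendsto_rpow_of_tendsto_lt_one
        (Eventually.of_forall fun n => ((hsol n).pos t (hsub ht)).le) hvt (hu t ht) hq)
    simpa [radialFlux] using hlim.const_mul (t ^ (N - 1))

theorem tendsto_deriv (hp : 1 < p) (hqtop : Tendsto q atTop atTop)
    (hsol : ∀ n, IsRadialNeumannSol N p (q n) (v n) (v' n))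
    (hconv : TendstoUniformlyOn v u atTop (Icc 0 1)) {r : ℝ} (hr : r ∈ Ioc (0 : ℝ) 1)
    (hu : ∀ t ∈ Icc 0 r, u t < 1) :
    Tendsto (fun n => v' n r) atTop
      (𝓝 (radialFluxInv N p (fun s => ∫ t in (0 : ℝ)..s, radialFlux N p u t) r)) := by
  have hlim := ((tendsto_radialFlux hp hqtop hsol hconv
    (Ioc_subset_Icc_self hr) hu).div_const (r ^ (N - 1))).rpow_const
    (p := (p - 1)⁻¹) (Or.inr (inv_nonneg.2 (sub_pos.2 hp).le))
  exact hlim.congr fun n =>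
    radialFluxInv_radialFlux hp.ne' hr.1 ((hsol n).deriv_nonneg r (Ioc_subset_Icc_self hr))

theorem eventually_deriv_le (hp : 1 < p)
    (hsol : ∀ n, IsRadialNeumannSol N p (q n) (v n) (v' n))
    (hconv : TendstoUniformlyOn v u atTop (Icc 0 1)) {δ r : ℝ} (hδ : 0 < δ) (hr : r ≤ 1)
    (hu : ∀ t ∈ Icc 0 r, u t < 1) :
    ∀ᶠ n in atTop, ∀ t ∈ Icc δ r, v' n t ≤ (1 / δ ^ (N - 1)) ^ (p - 1)⁻¹ := by
  filter_upwards [eventually_lt_one hsol hconv hr hu] with n hv t ht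
  have ht0 : 0 < t := hδ.trans_le ht.1
  have ht1 : t ∈ Icc (0 : ℝ) 1 := ⟨ht0.le, ht.2.trans hr⟩
  have hv't := (hsol n).deriv_nonneg t ht1
  have hflux : radialFlux N p (v' n) t ≤ 1 :=
    ((hsol n).radialFlux_le hp ht1 fun s hs => (hv s ⟨hs.1, hs.2.trans ht.2⟩).le).trans ht1.2
  rw [← radialFluxInv_radialFlux (N := N) hp.ne' ht0 hv't]
  exact rpow_le_rpow (div_nonneg (radialFlux_nonneg ht0.le hv't) (pow_nonneg ht0.le _))
    (div_le_div₀ zero_le_one hflux (pow_pos hδ _) (pow_le_pow_left₀ hδ.le ht.1 _))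
    (inv_nonneg.2 (sub_pos.2 hp).le)

theorem limit_sub_eq_integral (hp : 1 < p)
    (hqtop : Tendsto q atTop atTop) (hsol : ∀ n, IsRadialNeumannSol N p (q n) (v n) (v' n))
    (hconv : TendstoUniformlyOn v u atTop (Icc 0 1)) {δ r : ℝ} (hδ : 0 < δ) (hδr : δ ≤ r)
    (hr : r ≤ 1) (hu : ∀ t ∈ Icc 0 r, u t < 1) :
    u r - u δ =
      ∫ s in δ..r, radialFluxInv N p (fun s => ∫ t in (0 : ℝ)..s, radialFlux N p u t) s := by
  have hsub : Icc δ r ⊆ Icc (0 : ℝ) 1 := Icc_subset_Icc hδ.le hr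
  refine tendsto_nhds_unique ((hconv.tendsto_at (hsub ⟨hδr, le_rfl⟩)).sub
    (hconv.tendsto_at (hsub ⟨le_rfl, hδr⟩))) ?_
  refine (tendsto_intervalIntegral_of_eventually_abs_le (C := (1 / δ ^ (N - 1)) ^ (p - 1)⁻¹)
    hδr (Eventually.of_forall fun n => (hsol n).continuousOn_deriv.mono hsub) ?_
    fun t ht => ?_).congr fun n => (hsol n).integral_deriv hδ.le hδr hr
  · filter_upwards [eventually_deriv_le hp hsol hconv hδ hr hu] with n hn t ht
    rw [abs_of_nonneg ((hsol n).deriv_nonneg t (hsub ht))]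
    exact hn t ht
  · exact tendsto_deriv hp hqtop hsol hconv
      ⟨hδ.trans_le ht.1, ht.2.trans hr⟩ fun s hs => hu s ⟨hs.1, hs.2.trans ht.2⟩

theorem hasDerivAt_limit (hp : 1 < p) (hqtop : Tendsto q atTop atTop)
    (hsol : ∀ n, IsRadialNeumannSol N p (q n) (v n) (v' n))
    (hconv : TendstoUniformlyOn v u atTop (Icc 0 1)) {R : ℝ} (hR : R ≤ 1)
    (hu : ∀ t ∈ Ico 0 R, u t < 1) {r : ℝ} (hr : r ∈ Ioo 0 R) :
    HasDerivAt u (radialFluxInv N p (fun s => ∫ t in (0 : ℝ)..s, radialFlux N p u t) r) r := by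
  set g := radialFluxInv N p (fun s => ∫ t in (0 : ℝ)..s, radialFlux N p u t)
  have hg : ContinuousOn g (Ioo 0 1) := fun x hx =>
    (continuousAt_radialFluxInv hp hx.1.ne' (hasDerivAt_integral_of_continuousOn
      (continuousOn_radialFlux hp.le (continuousOn_limit hsol hconv))
      hx).continuousAt).continuousWithinAt
  have hr1 : r ∈ Ioo (0 : ℝ) 1 := ⟨hr.1, hr.2.trans_le hR⟩
  have hsub : uIcc (r / 2) r ⊆ Ioo 0 1 := by
    rw [uIcc_of_le (half_le_self hr.1.le)]
    exact fun t ht => ⟨(half_pos hr.1).trans_le ht.1, ht.2.trans_lt hr1.2⟩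
  have hG : HasDerivAt (fun s => u (r / 2) + ∫ t in (r / 2)..s, g t) (g r) r :=
    (integral_hasDerivAt_right (hg.mono hsub).intervalIntegrable
      (hg.stronglyMeasurableAtFilter isOpen_Ioo r hr1)
      (hg.continuousAt (Ioo_mem_nhds hr1.1 hr1.2))).const_add _
  refine hG.congr_of_eventuallyEq ?_
  filter_upwards [Ioo_mem_nhds (half_lt_self hr.1) hr.2] with s hs
  rw [← limit_sub_eq_integral hp hqtop hsol hconv (half_pos hr.1)
    hs.1.le (hs.2.le.trans hR) fun t ht => hu t ⟨ht.1, ht.2.trans_lt hs.2⟩]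
  ring

theorem radialFlux_deriv_limit (hp : 1 < p) (hqtop : Tendsto q atTop atTop)
    (hsol : ∀ n, IsRadialNeumannSol N p (q n) (v n) (v' n))
    (hconv : TendstoUniformlyOn v u atTop (Icc 0 1)) {R : ℝ} (hR : R ≤ 1)
    (hu : ∀ t ∈ Ico 0 R, u t < 1) {r : ℝ} (hr : r ∈ Ioo 0 R) :
    radialFlux N p (deriv u) r = ∫ t in (0 : ℝ)..r, radialFlux N p u t := by
  have hr1 : r ∈ Icc (0 : ℝ) 1 := ⟨hr.1.le, hr.2.le.trans hR⟩
  have hF : 0 ≤ ∫ t in (0 : ℝ)..r, radialFlux N p u t :=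
    ge_of_tendsto' (tendsto_radialFlux hp hqtop hsol hconv hr1
      fun t ht => hu t ⟨ht.1, ht.2.trans_lt hr.2⟩)
      fun n => radialFlux_nonneg hr.1.le ((hsol n).deriv_nonneg r hr1)
  rw [radialFlux, (hasDerivAt_limit hp hqtop hsol hconv hR hu hr).deriv]
  exact radialFlux_radialFluxInv hp.ne' hr.1 hF

end Sequence

end IsRadialNeumannSol

theorem limit_equation_general
    (N : ℕ) (p : ℝ) (hp1 : 1 < p)
    (q : ℕ → ℝ) (hqtop : Tendsto q atTop atTop)
    (v v' : ℕ → ℝ → ℝ)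
    (hsol : ∀ n, IsRadialNeumannSol N p (q n) (v n) (v' n))
    (vinf : ℝ → ℝ)
    (hconv : TendstoUniformlyOn (fun n r => v n r) vinf atTop (Set.Icc (0:ℝ) 1))
    (Rbar : ℝ) (hRbar : Rbar ∈ Set.Ioc (0:ℝ) 1)
    (hbelow : ∀ r ∈ Set.Ico (0:ℝ) Rbar, vinf r < 1) :
    (∀ r ∈ Set.Ioo (0:ℝ) Rbar, DifferentiableAt ℝ vinf r) ∧
    ∀ φ φ' : ℝ → ℝ, (∀ x, HasDerivAt φ (φ' x) x) → Continuous φ' →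
      HasCompactSupport φ → tsupport φ ⊆ Set.Ioo (0:ℝ) Rbar →
      (∫ r in (0:ℝ)..Rbar, r ^ (N - 1) *
        (deriv vinf r ^ (p - 1) * φ' r + vinf r ^ (p - 1) * φ r)) = 0 := by
  have hcont := continuousOn_radialFlux (N := N) hp1.le
    (IsRadialNeumannSol.continuousOn_limit hsol hconv)
  refine ⟨fun r hr => (IsRadialNeumannSol.hasDerivAt_limit hp1 hqtop hsol hconv hRbar.2 hbelow
    hr).differentiableAt, fun φ φ' hφ hφ' _ hsupp => ?_⟩
  have hflux : ∀ r ∈ Ioo 0 Rbar,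
      HasDerivAt (radialFlux N p (deriv vinf)) (radialFlux N p vinf r) r := by
    intro r hr
    refine (hasDerivAt_integral_of_continuousOn hcont
      ⟨hr.1, hr.2.trans_le hRbar.2⟩).congr_of_eventuallyEq ?_
    filter_upwards [Ioo_mem_nhds hr.1 hr.2] with s hs
    exact IsRadialNeumannSol.radialFlux_deriv_limit hp1 hqtop hsol hconv hRbar.2 hbelow hs
  calc (∫ r in (0:ℝ)..Rbar, r ^ (N - 1) *
        (deriv vinf r ^ (p - 1) * φ' r + vinf r ^ (p - 1) * φ r))
      = ∫ r in (0:ℝ)..Rbar,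
          (radialFlux N p (deriv vinf) r * φ' r + radialFlux N p vinf r * φ r) := by
        simp only [radialFlux]; congr 1; ext r; ring
    _ = 0 := integral_mul_deriv_add_deriv_mul_eq_zero isOpen_Ioo hflux
        (hcont.mono (Ioo_subset_Icc_self.trans (Icc_subset_Icc_right hRbar.2))) hφ hφ' hsupp
        (fun h => lt_irrefl _ (hsupp h).1) (fun h => lt_irrefl _ (hsupp h).2)

/-- If the solutions `v_n` converge uniformly to `v` with `v < 1` on `[0,R̄)`, then
`v` is differentiable on `(0,R̄)` and weakly solves the limit equation
`-(r^{N-1}(v')^{p-1})' + r^{N-1} v^{p-1} = 0` on `(0,R̄)`, the radial form of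
`-Δ_p v + v^{p-1} = 0` in `B_{R̄}`. -/
theorem limit_equation
    (N : ℕ) (hN : 1 ≤ N) (p : ℝ) (hp1 : 1 < p) (hp2 : p < 2)
    (q : ℕ → ℝ) (hq : ∀ n, p < q n) (hqtop : Tendsto q atTop atTop)
    (v v' : ℕ → ℝ → ℝ)
    (hsol : ∀ n, IsRadialNeumannSol N p (q n) (v n) (v' n))
    (vinf : ℝ → ℝ) (hvinfcont : ContinuousOn vinf (Set.Icc (0:ℝ) 1))
    (hvinfmono : MonotoneOn vinf (Set.Icc (0:ℝ) 1))
    (hconv : TendstoUniformlyOn (fun n r => v n r) vinf atTop (Set.Icc (0:ℝ) 1))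
    (Rbar : ℝ) (hRbar : Rbar ∈ Set.Ioc (0:ℝ) 1)
    (hbelow : ∀ r ∈ Set.Ico (0:ℝ) Rbar, vinf r < 1) :
    (∀ r ∈ Set.Ioo (0:ℝ) Rbar, DifferentiableAt ℝ vinf r) ∧
    ∀ φ φ' : ℝ → ℝ, (∀ x, HasDerivAt φ (φ' x) x) → Continuous φ' →
      HasCompactSupport φ → tsupport φ ⊆ Set.Ioo (0:ℝ) Rbar →
      (∫ r in (0:ℝ)..Rbar, r ^ (N - 1) *
        (deriv vinf r ^ (p - 1) * φ' r + vinf r ^ (p - 1) * φ r)) = 0 :=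
  limit_equation_general N p hp1 q hqtop v v' hsol vinf hconv Rbar hRbar hbelow
end
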